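/- Let A ⊆ 𝕋ⁿ. Then the closure of the interior of the signed polar A° equals A°, where closure and interior are taken in the space of signed pairs of (𝕋ⁿ)² (identified with (𝕊^∨)ⁿ with its topology). -/

import Mathlib

/-- The tropical (max-plus) semiring 𝕋 = ℝ ∪ {−∞}, modeled as `WithBot ℝ`. -/
abbrev Trop : Type := WithBot ℝ

/-- The map 𝕋 → ℝ, x ↦ eˣ (with e^{−∞} = 0), inducing the metric
d(x,y) = |eˣ − e^y| on 𝕋. -/
noncomputable def tropExp : Trop → ℝ := WithBot.recBotCoe (0 : ℝ) Real.exp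

/-- The topology on 𝕋 induced by the metric d(x,y) = |eˣ − e^y|. -/
noncomputable instance : TopologicalSpace Trop :=
  TopologicalSpace.induced tropExp inferInstance

/-- A pair of vectors (x⁺, x⁻) ∈ (𝕋ⁿ)² is signed if, for every coordinate i,
x⁺_i = −∞ or x⁻_i = −∞. -/
def SignedVecPair {n : ℕ} (x : (Fin n → Trop) × (Fin n → Trop)) : Prop :=
  ∀ i, x.1 i = ⊥ ∨ x.2 i = ⊥

/-- Tropical scalar product of vectors: ⟨x,y⟩ = max_i (x_i + y_i). -/
noncomputable def tdot {n : ℕ} (x y : Fin n → Trop) : Trop :=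
  Finset.univ.sup fun i => x i + y i

/-- The "signed part" f^∨ of a pair of vectors f = (f⁺, f⁻):
f^{∨+}_i = f⁺_i if f⁺_i ≥ f⁻_i and −∞ otherwise;
f^{∨−}_i = f⁻_i if f⁻_i > f⁺_i and −∞ otherwise. -/
noncomputable def vee {n : ℕ} (f : (Fin n → Trop) × (Fin n → Trop)) :
    (Fin n → Trop) × (Fin n → Trop) :=
  (fun i => if f.2 i ≤ f.1 i then f.1 i else ⊥,
   fun i => if f.1 i < f.2 i then f.2 i else ⊥)

/-- Tropical scalar action: (λ ⊙ f)_i = λ + f_i. -/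
noncomputable def tsmul {n : ℕ} (l : Trop) (f : Fin n → Trop) : Fin n → Trop :=
  fun i => l + f i

/-- A monotone pre-congruence C ⊆ (𝕋ⁿ)²: stable by tropical scalar multiplication,
by componentwise max, by "transitivity" (f⁻ = g⁺ implies (f⁺,g⁻) ∈ C), and containing
every pair (f⁺,f⁻) with f⁺ ≥ f⁻. -/
structure IsMonotonePrecongruence {n : ℕ} (C : Set ((Fin n → Trop) × (Fin n → Trop))) : Prop where
  smul_mem : ∀ f ∈ C, ∀ l : Trop, (tsmul l f.1, tsmul l f.2) ∈ C
  add_mem : ∀ f ∈ C, ∀ g ∈ C, (f.1 ⊔ g.1, f.2 ⊔ g.2) ∈ C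
  trans_mem : ∀ f ∈ C, ∀ g ∈ C, f.2 = g.1 → (f.1, g.2) ∈ C
  monotone_mem : ∀ f : (Fin n → Trop) × (Fin n → Trop), f.2 ≤ f.1 → f ∈ C

/-- The pair x ⊕_i y = (x⁺ ⊕ y⁺_{∖i}, x⁻_{∖i} ⊕ y⁻), where z_{∖i} is z with
coordinate i replaced by −∞. -/
noncomputable def oplusI {n : ℕ} (i : Fin n)
    (x y : (Fin n → Trop) × (Fin n → Trop)) : (Fin n → Trop) × (Fin n → Trop) :=
  (x.1 ⊔ Function.update y.1 i ⊥, Function.update x.2 i ⊥ ⊔ y.2)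

/-- A signed bend cone R ⊆ (𝕋ⁿ)²: all elements are signed pairs, R contains all
pairs (x⁺, −∞), is stable by tropical scalar multiplication, and is stable under
the operations x, y ↦ (x ⊕ y)^∨ and x, y ↦ (x ⊕_i y)^∨ (the latter when x⁻_i = y⁺_i). -/
structure IsSignedBendCone {n : ℕ} (R : Set ((Fin n → Trop) × (Fin n → Trop))) : Prop where
  signed : ∀ x ∈ R, SignedVecPair x
  pos_mem : ∀ xp : Fin n → Trop, (xp, fun _ => (⊥ : Trop)) ∈ R
  smul_mem : ∀ x ∈ R, ∀ l : Trop, (tsmul l x.1, tsmul l x.2) ∈ R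
  add_vee_mem : ∀ x ∈ R, ∀ y ∈ R, vee (x.1 ⊔ y.1, x.2 ⊔ y.2) ∈ R
  addI_vee_mem : ∀ x ∈ R, ∀ y ∈ R, ∀ i : Fin n, x.2 i = y.1 i → vee (oplusI i x y) ∈ R

/-- The one-sided polar B^⊲ = {a ∈ 𝕋ⁿ : ⟨x⁺,a⟩ ≥ ⟨x⁻,a⟩ for all (x⁺,x⁻) ∈ B}. -/
def onePolar {n : ℕ} (B : Set ((Fin n → Trop) × (Fin n → Trop))) : Set (Fin n → Trop) :=
  {a | ∀ x ∈ B, tdot x.2 a ≤ tdot x.1 a}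

/-- The signed part C^∨ of a set C ⊆ (𝕋ⁿ)²: the signed pairs belonging to C. -/
def signedPart {n : ℕ} (C : Set ((Fin n → Trop) × (Fin n → Trop))) :
    Set ((Fin n → Trop) × (Fin n → Trop)) :=
  {x ∈ C | SignedVecPair x}

/-- The signed polar A° of A ⊆ 𝕋ⁿ : the set of signed pairs (x⁺,x⁻) with
⟨x⁺,a⟩ ≥ ⟨x⁻,a⟩ for all a ∈ A. -/
def signedPolar {n : ℕ} (A : Set (Fin n → Trop)) :
    Set ((Fin n → Trop) × (Fin n → Trop)) :=
  {x | SignedVecPair x ∧ ∀ a ∈ A, tdot x.2 a ≤ tdot x.1 a}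

/-- The signed polar of A ⊆ 𝕋ⁿ, viewed as a subset of the space of signed pairs
of (𝕋ⁿ)² (identified with (𝕊^∨)ⁿ with its subspace topology). -/
def signedPolarSub {n : ℕ} (A : Set (Fin n → Trop)) :
    Set {x : (Fin n → Trop) × (Fin n → Trop) // SignedVecPair x} :=
  {x | ∀ a ∈ A, tdot x.val.2 a ≤ tdot x.val.1 a}


/-!
Under `x ↦ eˣ`, `𝕋` is homeomorphic and order-isomorphic to `ℝ≥0`, with `⊙` becoming
multiplication, so `A°` becomes the set of signed pairs `(u⁺, u⁻)` of nonnegative vectors with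
`maxᵢ u⁻ᵢ aᵢ ≤ maxᵢ u⁺ᵢ aᵢ` for all `a` in the image of `A`. This set is closed. Any `u` in it is
the limit, as `t → 1⁻`, of the points obtained by shrinking `u⁻` to `t² u⁻` and raising `u⁺` to at
least `1 - t` on the coordinates where `u⁻` vanishes. These points are interior: every signed `v`
close enough to one of them has `v⁺ ≥ t ⋅ (raised u⁺)` and `v⁻ ≤ t u⁻` (on the coordinates where
`u⁻ᵢ = 0` this holds because `v⁺ᵢ > 0` forces `v⁻ᵢ = 0`), so the polar inequality of `u` survives
with a factor `t` on both sides.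
-/

open scoped NNReal
open Filter Topology Set

section SignedPolarNNReal

variable {ι : Type*}

def IsSignedPair (u : (ι → ℝ≥0) × (ι → ℝ≥0)) : Prop :=
  ∀ i, u.1 i = 0 ∨ u.2 i = 0

noncomputable def supMul [Fintype ι] (x a : ι → ℝ≥0) : ℝ≥0 :=
  Finset.univ.sup fun i => x i * a i

def signedPolarNNReal [Fintype ι] (B : Set (ι → ℝ≥0)) :
    Set {u : (ι → ℝ≥0) × (ι → ℝ≥0) // IsSignedPair u} :=
  {u | ∀ a ∈ B, supMul u.1.2 a ≤ supMul u.1.1 a}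

lemma continuous_supMul_left [Fintype ι] (a : ι → ℝ≥0) :
    Continuous fun x : ι → ℝ≥0 => supMul x a := by
  unfold supMul
  fun_prop

lemma isClosed_signedPolarNNReal [Fintype ι] (B : Set (ι → ℝ≥0)) :
    IsClosed (signedPolarNNReal B) := by
  simp only [signedPolarNNReal, ofPred_forall]
  exact isClosed_biInter fun a _ => isClosed_le
    ((continuous_supMul_left a).comp (by fun_prop)) ((continuous_supMul_left a).comp (by fun_prop))

lemma supMul_mono_left [Fintype ι] {x y : ι → ℝ≥0} (h : x ≤ y) (a : ι → ℝ≥0) :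
    supMul x a ≤ supMul y a :=
  Finset.sup_mono_fun fun i _ => mul_le_mul_left (h i) (a i)

lemma supMul_smul_left [Fintype ι] (t : ℝ≥0) (x a : ι → ℝ≥0) :
    supMul (t • x) a = t * supMul x a := by
  simp only [supMul, NNReal.mul_finset_sup, Pi.smul_apply, smul_eq_mul, mul_assoc]

lemma supMul_le_supMul_of_smul_le [Fintype ι] {x v : (ι → ℝ≥0) × (ι → ℝ≥0)} {a : ι → ℝ≥0}
    {t : ℝ≥0} (hx : supMul x.2 a ≤ supMul x.1 a) (h₁ : t • x.1 ≤ v.1) (h₂ : v.2 ≤ t • x.2) :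
    supMul v.2 a ≤ supMul v.1 a :=
  calc supMul v.2 a ≤ t * supMul x.2 a := (supMul_mono_left h₂ a).trans_eq (supMul_smul_left ..)
    _ ≤ t * supMul x.1 a := mul_le_mul_right hx t
    _ ≤ supMul v.1 a := (supMul_smul_left ..).symm.trans_le (supMul_mono_left h₁ a)

noncomputable def inwardPerturb (t : ℝ≥0) (u : (ι → ℝ≥0) × (ι → ℝ≥0)) :
    (ι → ℝ≥0) × (ι → ℝ≥0) :=
  (fun i => if u.2 i = 0 then max (u.1 i) (1 - t) else 0, t ^ 2 • u.2)

lemma isSignedPair_inwardPerturb (t : ℝ≥0) (u : (ι → ℝ≥0) × (ι → ℝ≥0)) :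
    IsSignedPair (inwardPerturb t u) := fun i => by
  by_cases h : u.2 i = 0
  · exact .inr (by simp [inwardPerturb, h])
  · exact .inl (if_neg h)

lemma inwardPerturb_one {u : (ι → ℝ≥0) × (ι → ℝ≥0)} (hu : IsSignedPair u) :
    inwardPerturb 1 u = u := by
  refine Prod.ext (funext fun i => ?_) (by simp [inwardPerturb])
  by_cases h : u.2 i = 0
  · simp [inwardPerturb, h]
  · simp [inwardPerturb, h, (hu i).resolve_right h]

lemma continuous_inwardPerturb (u : (ι → ℝ≥0) × (ι → ℝ≥0)) :
    Continuous fun t => inwardPerturb t u :=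
  .prodMk (continuous_pi fun i => by split_ifs <;> fun_prop) (by fun_prop)

lemma le_inwardPerturb_fst {u : (ι → ℝ≥0) × (ι → ℝ≥0)} (hu : IsSignedPair u) (t : ℝ≥0) :
    u.1 ≤ (inwardPerturb t u).1 := fun i => by
  by_cases h : u.2 i = 0
  · simp [inwardPerturb, h]
  · simp [inwardPerturb, h, (hu i).resolve_right h]

lemma inwardPerturb_mem_interior [Fintype ι] {B : Set (ι → ℝ≥0)} {u : {u // IsSignedPair u}}
    (hu : u ∈ signedPolarNNReal B) {t : ℝ≥0} (ht : t ∈ Ioo 0 1) :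
    (⟨inwardPerturb t u.1, isSignedPair_inwardPerturb t u.1⟩ : {u // IsSignedPair u}) ∈
      interior (signedPolarNNReal B) := by
  set y : {u // IsSignedPair u} := ⟨inwardPerturb t u.1, isSignedPair_inwardPerturb t u.1⟩
  have hlow : ∀ᶠ v in 𝓝 y, ∀ i, u.1.2 i = 0 → t * y.1.1 i < v.1.1 i := by
    refine eventually_all.2 fun i => ?_
    by_cases h : u.1.2 i = 0
    · have hy : 0 < y.1.1 i := by simpa [y, inwardPerturb, h] using Or.inr ht.2
      have hcont : Continuous fun v : {u // IsSignedPair u} => v.1.1 i := by fun_prop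
      exact (hcont.tendsto y).eventually_const_lt (mul_lt_of_lt_one_left hy ht.2) |>.mono
        fun _ h' _ => h'
    · exact .of_forall fun _ h' => absurd h' h
  have hup : ∀ᶠ v in 𝓝 y, ∀ i, u.1.2 i ≠ 0 → v.1.2 i < t * u.1.2 i := by
    refine eventually_all.2 fun i => ?_
    by_cases h : u.1.2 i = 0
    · exact .of_forall fun _ h' => absurd h h'
    · have hy : y.1.2 i < t * u.1.2 i := by
        simpa [y, inwardPerturb, pow_two, mul_assoc] using
          mul_lt_of_lt_one_left (mul_pos ht.1 (pos_iff_ne_zero.2 h)) ht.2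
      have hcont : Continuous fun v : {u // IsSignedPair u} => v.1.2 i := by fun_prop
      exact (hcont.tendsto y).eventually_lt_const hy |>.mono fun _ h' _ => h'
  rw [mem_interior_iff_mem_nhds]
  filter_upwards [hlow, hup] with v hv₁ hv₂ a ha
  refine supMul_le_supMul_of_smul_le (x := (y.1.1, u.1.2)) (t := t)
    ((hu a ha).trans (supMul_mono_left (le_inwardPerturb_fst u.2 t) a)) (fun i => ?_) (fun i => ?_)
  · by_cases h : u.1.2 i = 0
    · exact (hv₁ i h).le
    · simp [y, inwardPerturb, h]
  · by_cases h : u.1.2 i = 0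
    · have : v.1.1 i ≠ 0 := (zero_le.trans_lt (hv₁ i h)).ne'
      simp [(v.2 i).resolve_left this]
    · exact (hv₂ i h).le

theorem closure_interior_signedPolarNNReal [Fintype ι] (B : Set (ι → ℝ≥0)) :
    closure (interior (signedPolarNNReal B)) = signedPolarNNReal B := by
  refine (closure_minimal interior_subset (isClosed_signedPolarNNReal B)).antisymm fun u hu => ?_
  have : (𝓝[<] (1 : ℝ≥0)).NeBot := nhdsLT_neBot_of_exists_lt ⟨0, one_pos⟩
  have hlim : Tendsto (fun t => (⟨inwardPerturb t u.1, isSignedPair_inwardPerturb t u.1⟩ :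
      {u // IsSignedPair u})) (𝓝[<] 1) (𝓝 u) := by
    rw [tendsto_subtype_rng]
    simpa [inwardPerturb_one u.2] using
      ((continuous_inwardPerturb u.1).continuousWithinAt (s := Iio 1) (x := 1)).tendsto
  refine mem_closure_of_tendsto hlim ?_
  filter_upwards [Ioo_mem_nhdsLT one_pos] with t ht using inwardPerturb_mem_interior hu ht

end SignedPolarNNReal

lemma tropExp_nonneg (x : Trop) : 0 ≤ tropExp x := by
  induction x using WithBot.recBotCoe with
  | bot => exact le_rfl
  | coe r => exact (Real.exp_pos r).le

lemma tropExp_strictMono : StrictMono tropExp := by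
  intro x y hxy
  induction y using WithBot.recBotCoe with
  | bot => exact absurd hxy not_lt_bot
  | coe s =>
    induction x using WithBot.recBotCoe with
    | bot => exact Real.exp_pos s
    | coe r => exact Real.exp_lt_exp.2 (WithBot.coe_lt_coe.1 hxy)

lemma tropExp_add (x y : Trop) : tropExp (x + y) = tropExp x * tropExp y := by
  induction x using WithBot.recBotCoe with
  | bot => simp [tropExp]
  | coe r =>
    induction y using WithBot.recBotCoe with
    | bot => simp [tropExp]
    | coe s => exact Real.exp_add r s

noncomputable def tropOrderIso : Trop ≃o ℝ≥0 :=
  StrictMono.orderIsoOfSurjective (fun x => ⟨tropExp x, tropExp_nonneg x⟩)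
    (fun _ _ h => tropExp_strictMono h) fun y => by
      rcases y.2.eq_or_lt with hy | hy
      · exact ⟨⊥, NNReal.eq hy⟩
      · exact ⟨(Real.log y : ℝ), NNReal.eq (Real.exp_log hy)⟩

noncomputable def tropHomeomorph : Trop ≃ₜ ℝ≥0 :=
  tropOrderIso.toEquiv.toHomeomorphOfIsInducing <|
    (IsInducing.subtypeVal.of_comp_iff (f := tropOrderIso)).1 ⟨rfl⟩

lemma tropOrderIso_add (x y : Trop) : tropOrderIso (x + y) = tropOrderIso x * tropOrderIso y :=
  NNReal.eq (tropExp_add x y)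

lemma tropOrderIso_eq_zero_iff {x : Trop} : tropOrderIso x = 0 ↔ x = ⊥ :=
  tropOrderIso.injective.eq_iff' (tropOrderIso.map_bot.trans bot_eq_zero)

lemma tropOrderIso_tdot {n : ℕ} (x a : Fin n → Trop) :
    tropOrderIso (tdot x a) = supMul (tropOrderIso ∘ x) (tropOrderIso ∘ a) := by
  simp only [tdot, map_finset_sup, supMul]
  exact Finset.sup_congr rfl fun i _ => tropOrderIso_add (x i) (a i)

noncomputable def pairHomeomorph (n : ℕ) :
    (Fin n → Trop) × (Fin n → Trop) ≃ₜ (Fin n → ℝ≥0) × (Fin n → ℝ≥0) :=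
  (Homeomorph.piCongrRight fun _ => tropHomeomorph).prodCongr
    (Homeomorph.piCongrRight fun _ => tropHomeomorph)

lemma signedVecPair_iff_isSignedPair {n : ℕ} (x : (Fin n → Trop) × (Fin n → Trop)) :
    SignedVecPair x ↔ IsSignedPair (pairHomeomorph n x) :=
  forall_congr' fun _ => or_congr tropOrderIso_eq_zero_iff.symm tropOrderIso_eq_zero_iff.symm

noncomputable def signedPairHomeomorph (n : ℕ) :
    {x : (Fin n → Trop) × (Fin n → Trop) // SignedVecPair x} ≃ₜ
      {u : (Fin n → ℝ≥0) × (Fin n → ℝ≥0) // IsSignedPair u} :=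
  (pairHomeomorph n).subtype signedVecPair_iff_isSignedPair

lemma signedPolarSub_eq_preimage {n : ℕ} (A : Set (Fin n → Trop)) :
    signedPolarSub A =
      signedPairHomeomorph n ⁻¹' signedPolarNNReal ((tropOrderIso ∘ ·) '' A) := by
  ext x
  simp only [signedPolarSub, signedPolarNNReal, mem_ofPred_eq, mem_preimage, forall_mem_image,
    ← tropOrderIso.le_iff_le, tropOrderIso_tdot]
  rfl

/-- The closure of the interior of the signed polar A° equals A°, in the space of
signed pairs of (𝕋ⁿ)². -/
theorem closure_interior_signedPolar {n : ℕ} (A : Set (Fin n → Trop)) :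
    closure (interior (signedPolarSub A)) = signedPolarSub A := by
  rw [signedPolarSub_eq_preimage, ← Homeomorph.preimage_interior, ← Homeomorph.preimage_closure,
    closure_interior_signedPolarNNReal]
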